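/- For s, t ∈ T with |st⁻¹| = 3 and indices i < j in {1,…,n}, the elements t.(i,j) and s.(i,j) of the wreath product T wr Sym(n) have product of order 3, and {t.(i,j), s.(i,j), (st⁻¹s).(i,j)} is a line of the Fischer space. -/

import Mathlib

/-- The action of `Sym(n)` on the base group `Tⁿ` by permuting coordinates. -/
def permMulAut (T : Type*) [Group T] (n : ℕ) :
    Equiv.Perm (Fin n) →* MulAut (Fin n → T) where
  toFun σ :=
    { toFun := fun f => f ∘ σ.symm
      invFun := fun f => f ∘ σ
      left_inv := fun f => by funext i; simp
      right_inv := fun f => by funext i; simp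
      map_mul' := fun f g => rfl }
  map_one' := by
    apply MulEquiv.ext; intro f; funext i; rfl
  map_mul' := fun σ τ => by
    apply MulEquiv.ext; intro f; funext i; rfl

/-- The wreath product `T wr Sym(n)`. -/
abbrev WreathProduct (T : Type*) [Group T] (n : ℕ) :=
  SemidirectProduct (Fin n → T) (Equiv.Perm (Fin n)) (permMulAut T n)

/-- The 3-transposition `t.(i,j) := t_i t_j⁻¹ (i,j)` of `T wr Sym(n)`. -/
def wrTransposition (T : Type*) [Group T] (n : ℕ) (t : T) (i j : Fin n) :
    WreathProduct T n :=
  SemidirectProduct.inl (Pi.mulSingle i t * Pi.mulSingle j t⁻¹) *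
    SemidirectProduct.inr (Equiv.swap i j)

/-! The swap `(i j)` squares to `1` and exchanges the only two non-trivial coordinates, so
`t.(i,j) * s.(i,j)` lies in the base group, with coordinates `t s⁻¹` at `i` and `t⁻¹ s` at `j`.
Both are conjugate to `(s t⁻¹)^{±1}`, hence of order `3`, and so is their product. The conjugate
`s.(i,j)⁻¹ t.(i,j) s.(i,j)` is computed coordinatewise in the same way. -/

lemma Pi.mulSingle_mul_mulSingle_eq_one_iff {ι M : Type*} [DecidableEq ι] [Monoid M] {i j : ι}
    (hij : i ≠ j) {a b : M} : (Pi.mulSingle i a * Pi.mulSingle j b : ι → M) = 1 ↔ a = 1 ∧ b = 1 := by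
  refine ⟨fun h => ⟨?_, ?_⟩, fun ⟨ha, hb⟩ => by simp [ha, hb]⟩
  · simpa [hij] using congr_fun h i
  · simpa [hij.symm] using congr_fun h j

lemma Pi.orderOf_mulSingle_mul_mulSingle {ι G : Type*} [DecidableEq ι] [Group G] {i j : ι}
    (hij : i ≠ j) (a b : G) :
    orderOf (Pi.mulSingle i a * Pi.mulSingle j b : ι → G) = (orderOf a).lcm (orderOf b) := by
  rw [← Prod.orderOf_mk, orderOf_eq_orderOf_iff]
  intro m
  rw [(Pi.mulSingle_commute (f := fun _ : ι => G) hij a b).mul_pow, ← Pi.mulSingle_pow,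
    ← Pi.mulSingle_pow, Pi.mulSingle_mul_mulSingle_eq_one_iff hij, Prod.pow_mk, Prod.mk_eq_one]

section

open SemidirectProduct

variable {T : Type*} [Group T] {n : ℕ}

lemma permMulAut_apply (σ : Equiv.Perm (Fin n)) (f : Fin n → T) :
    permMulAut T n σ f = f ∘ ⇑σ⁻¹ := rfl

lemma wrTransposition_left_apply (t : T) {i j : Fin n} (hij : i ≠ j) (k : Fin n) :
    (wrTransposition T n t i j).left k = if k = i then t else if k = j then t⁻¹ else 1 := by
  rcases eq_or_ne k i with rfl | hi
  · simp [wrTransposition, hij.symm]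
  · simp [wrTransposition, Pi.mulSingle_apply, hi]

@[simp]
lemma wrTransposition_right (t : T) (i j : Fin n) :
    (wrTransposition T n t i j).right = Equiv.swap i j := by
  simp [wrTransposition]

lemma wrTransposition_mul_wrTransposition (t s : T) {i j : Fin n} (hij : i ≠ j) :
    wrTransposition T n t i j * wrTransposition T n s i j =
      inl (Pi.mulSingle i (t * s⁻¹) * Pi.mulSingle j (t⁻¹ * s)) := by
  ext k
  · simp only [mul_left, wrTransposition_right, permMulAut_apply, Pi.mul_apply, Function.comp_apply,
      wrTransposition_left_apply _ hij, left_inl, Pi.mulSingle_apply, Equiv.swap_inv]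
    rcases eq_or_ne k i with rfl | hi
    · simp [hij, hij.symm]
    rcases eq_or_ne k j with rfl | hj
    · simp [hij.symm]
    · simp [hi, hj, Equiv.swap_apply_of_ne_of_ne]
  · simp

lemma inv_wrTransposition_mul_mul (t s : T) {i j : Fin n} (hij : i ≠ j) :
    (wrTransposition T n s i j)⁻¹ * wrTransposition T n t i j * wrTransposition T n s i j =
      wrTransposition T n (s * t⁻¹ * s) i j := by
  ext k
  · simp only [mul_left, inv_left, mul_right, inv_right, wrTransposition_right,
      permMulAut_apply, Equiv.swap_inv, Pi.mul_apply, Pi.inv_apply, Function.comp_apply, wrTransposition_left_apply _ hij]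
    rcases eq_or_ne k i with rfl | hi
    · simp [hij.symm]
    rcases eq_or_ne k j with rfl | hj
    · simp [hij.symm, mul_assoc]
    · simp [hi, hj, Equiv.swap_apply_of_ne_of_ne]
  · simp

lemma orderOf_wrTransposition_mul_wrTransposition {t s : T} (hst : orderOf (s * t⁻¹) = 3)
    {i j : Fin n} (hij : i ≠ j) :
    orderOf (wrTransposition T n t i j * wrTransposition T n s i j) = 3 := by
  have h₁ : orderOf (t * s⁻¹) = 3 := by rw [← hst, ← orderOf_inv, mul_inv_rev, inv_inv]
  have h₂ : orderOf (t⁻¹ * s) = 3 := by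
    rw [← hst]
    exact SemiconjBy.orderOf_eq t (by simp [SemiconjBy, mul_assoc])
  rw [wrTransposition_mul_wrTransposition t s hij,
    orderOf_injective _ inl_injective, Pi.orderOf_mulSingle_mul_mulSingle hij, h₁, h₂,
    Nat.lcm_self]

end

theorem statement12_general (T : Type*) [Group T]
    (n : ℕ) (s t : T) (hst : orderOf (s * t⁻¹) = 3)
    (i j : Fin n) (hij : i < j)
    (c d : WreathProduct T n)
    (hc : c = wrTransposition T n t i j) (hd : d = wrTransposition T n s i j) :
    orderOf (c * d) = 3 ∧
      d⁻¹ * c * d = wrTransposition T n (s * t⁻¹ * s) i j ∧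
      ({c, d, d⁻¹ * c * d} : Set (WreathProduct T n)) =
        {wrTransposition T n t i j, wrTransposition T n s i j,
          wrTransposition T n (s * t⁻¹ * s) i j} := by
  subst hc hd
  have hconj := inv_wrTransposition_mul_mul t s hij.ne
  exact ⟨orderOf_wrTransposition_mul_wrTransposition hst hij.ne, hconj, by rw [hconj]⟩

/-- For `s, t ∈ T` (all elements of `T` of order 1, 2, or 3) with
`|st⁻¹| = 3` and indices `i < j`, the elements `c = t.(i,j)` and `d = s.(i,j)` of
`T wr Sym(n)` have product of order 3, and `{t.(i,j), s.(i,j), (st⁻¹s).(i,j)}` is the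
Fischer line through them, i.e. `c^d = d⁻¹cd = (st⁻¹s).(i,j)`. -/
theorem statement12 (T : Type*) [Group T]
    (hT : ∀ t : T, orderOf t ∈ ({1, 2, 3} : Set ℕ))
    (n : ℕ) (s t : T) (hst : orderOf (s * t⁻¹) = 3)
    (i j : Fin n) (hij : i < j)
    (c d : WreathProduct T n)
    (hc : c = wrTransposition T n t i j) (hd : d = wrTransposition T n s i j) :
    orderOf (c * d) = 3 ∧
      d⁻¹ * c * d = wrTransposition T n (s * t⁻¹ * s) i j ∧
      ({c, d, d⁻¹ * c * d} : Set (WreathProduct T n)) =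
        {wrTransposition T n t i j, wrTransposition T n s i j,
          wrTransposition T n (s * t⁻¹ * s) i j} :=
  statement12_general T n s t hst i j hij c d hc hd
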